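/- arXiv:1401.5354 — 10 statements merged into one kernel-verified Lean document; each statement's English description precedes it below -/
import Mathlib

section
/- Let A and B be finite sets with each applicant in A having a strict total order on B, and let E ⊆ B with |E| = |A|. Then the following are equivalent: (1) there exists a Pareto optimal matching τ with image exactly E; (2) there exists an ordering (permutation) π of A such that the greedy matching induced by π has image exactly E; (3) there exists a matching τ with image exactly E having no blocking coalition of size one. -/
/-- `S` is a blocking coalition of the matching `τ`. -/
def IsBlocking {A B : Type*} (pref : A → B → B → Prop) (τ : A → B) (S : Set A) : Prop :=
  S.Nonempty ∧ ∃ τ' : A → B, Function.Injective τ' ∧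
    (∀ a ∉ S, τ' a = τ a) ∧ ∀ a ∈ S, pref a (τ' a) (τ a)

/-- `τ` is a Pareto optimal matching. -/
def IsPOM {A B : Type*} (pref : A → B → B → Prop) (τ : A → B) : Prop :=
  Function.Injective τ ∧ ∀ S : Set A, ¬ IsBlocking pref τ S

/-- `τ` has no blocking coalition of size one. -/
def Is1POM {A B : Type*} (pref : A → B → B → Prop) (τ : A → B) : Prop :=
  ∀ a : A, ¬ IsBlocking pref τ {a}

/-- `τ` is the greedy matching obtained by processing the applicants in the
order `π`: at each step the current applicant receives its most preferred
house not taken by an earlier applicant. -/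
def IsGreedy {A B : Type*} [Fintype A] (pref : A → B → B → Prop)
    (π : Fin (Fintype.card A) ≃ A) (τ : A → B) : Prop :=
  ∀ i : Fin (Fintype.card A), ∀ b : B,
    b ≠ τ (π i) → (∀ j, j < i → b ≠ τ (π j)) → pref (π i) (τ (π i)) b


/-!
A matching is 1-Pareto optimal exactly when every house that an applicant prefers to its own
is already taken; in particular greedy matchings are 1-Pareto optimal. A blocking coalition of a
1-Pareto optimal matching can only reshuffle the houses of its image, so it produces another
1-Pareto optimal matching with the same image in which the total number of better houses of the
image strictly drops; iterating ends at a Pareto optimal matching with that image.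
A Pareto optimal matching is greedy: among the applicants not yet processed, some applicant already
holds its favourite remaining house, for otherwise letting each of them point to the holder of a
better remaining house produces a cycle, and trading along it is a blocking coalition.
-/

open Function Set

section

variable {A B : Type*} {pref : A → B → B → Prop}

lemma IsPOM.is1POM {τ : A → B} (h : IsPOM pref τ) : Is1POM pref τ :=
  fun a => h.2 {a}

lemma Is1POM.mem_range_of_pref {τ : A → B} (hτ : Injective τ) (h : Is1POM pref τ) {a : A}
    {b : B} (hb : pref a b (τ a)) : b ∈ range τ := by
  classical
  by_contra hbτ
  refine h a ⟨singleton_nonempty a, update τ a b, ?_, fun x hx => update_of_ne hx _ _, ?_⟩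
  · intro x y hxy
    by_cases hx : x = a <;> by_cases hy : y = a <;>
      simp_all [hτ.eq_iff, eq_comm (a := b)]
  · rintro x rfl
    simpa using hb

lemma is1POM_of_forall_pref_mem_range [∀ a, Std.Irrefl (pref a)] {τ : A → B}
    (h : ∀ a b, pref a b (τ a) → b ∈ range τ) : Is1POM pref τ := by
  rintro a ⟨-, τ', hτ', hoff, hon⟩
  have ha := hon a rfl
  obtain ⟨a', ha'⟩ := h a _ ha
  have hne : a' ≠ a := by
    rintro rfl
    exact irrefl _ (ha' ▸ ha)
  exact hne (hτ' (by rw [hoff a' hne, ha']))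

lemma IsGreedy.is1POM [Fintype A] [∀ a, IsStrictOrder B (pref a)]
    {π : Fin (Fintype.card A) ≃ A} {τ : A → B} (hg : IsGreedy pref π τ) : Is1POM pref τ := by
  refine is1POM_of_forall_pref_mem_range fun a b hb => ?_
  by_contra hbτ
  have hfav := hg (π.symm a) b (by simpa using fun h => hbτ ⟨a, h.symm⟩)
    fun j _ h => hbτ ⟨π j, h.symm⟩
  rw [π.apply_symm_apply] at hfav
  exact asymm hb hfav

section Improvement

lemma IsBlocking.exists_improvement {τ : A → B} {S : Set A} (h : IsBlocking pref τ S) :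
    ∃ τ' : A → B, Injective τ' ∧ (∀ a, τ' a = τ a ∨ pref a (τ' a) (τ a)) ∧
      ∃ a, pref a (τ' a) (τ a) := by
  obtain ⟨⟨a, ha⟩, τ', hτ', hoff, hon⟩ := h
  refine ⟨τ', hτ', fun x => ?_, a, hon a ha⟩
  by_cases hx : x ∈ S
  · exact .inr (hon x hx)
  · exact .inl (hoff x hx)

variable {τ τ' : A → B} (hτ : Injective τ) (h1 : Is1POM pref τ) (hτ' : Injective τ')
  (hle : ∀ a, τ' a = τ a ∨ pref a (τ' a) (τ a))
include hτ h1 hτ' hle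

lemma Is1POM.range_eq_of_forall_pref_or_eq [Finite A] : range τ' = range τ := by
  refine eq_of_subset_of_ncard_le (range_subset_iff.2 fun a => ?_)
    (by rw [ncard_range_of_injective hτ, ncard_range_of_injective hτ'])
  rcases hle a with h | h
  · exact h ▸ mem_range_self a
  · exact h1.mem_range_of_pref hτ h

lemma Is1POM.of_forall_pref_or_eq [Finite A] [∀ a, IsStrictOrder B (pref a)] :
    Is1POM pref τ' := by
  refine is1POM_of_forall_pref_mem_range fun a b hb => ?_
  rw [h1.range_eq_of_forall_pref_or_eq hτ hτ' hle]
  rcases hle a with h | h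
  · exact h1.mem_range_of_pref hτ (h ▸ hb)
  · exact h1.mem_range_of_pref hτ (_root_.trans hb h)

end Improvement

noncomputable def numPreferred (pref : A → B → B → Prop) (E : Set B) (a : A) (b : B) : ℕ :=
  {c ∈ E | pref a c b}.ncard

section numPreferred

variable {E : Set B} (hE : E.Finite)
include hE

lemma numPreferred_le_of_pref_or_eq [∀ a, IsTrans B (pref a)] {a : A} {b b' : B}
    (h : b = b' ∨ pref a b b') : numPreferred pref E a b ≤ numPreferred pref E a b' := by
  refine ncard_le_ncard (fun c hc => ⟨hc.1, ?_⟩) (hE.subset (sep_subset _ _))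
  rcases h with rfl | h
  · exact hc.2
  · exact _root_.trans hc.2 h

lemma numPreferred_lt_of_pref [∀ a, IsStrictOrder B (pref a)] {a : A} {b b' : B} (hb : b ∈ E)
    (h : pref a b b') : numPreferred pref E a b < numPreferred pref E a b' := by
  have hsub : {c ∈ E | pref a c b} ⊆ {c ∈ E | pref a c b'} :=
    fun c hc => ⟨hc.1, _root_.trans hc.2 h⟩
  refine ncard_lt_ncard ((ssubset_iff_of_subset hsub).2 ⟨b, ⟨hb, h⟩, fun hb' => irrefl _ hb'.2⟩)
    (hE.subset (sep_subset _ _))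

lemma sum_numPreferred_lt [Fintype A] [∀ a, IsStrictOrder B (pref a)] {τ τ' : A → B}
    (hτ' : ∀ a, τ' a ∈ E) (hle : ∀ a, τ' a = τ a ∨ pref a (τ' a) (τ a))
    (hlt : ∃ a, pref a (τ' a) (τ a)) :
    ∑ a, numPreferred pref E a (τ' a) < ∑ a, numPreferred pref E a (τ a) := by
  obtain ⟨a, ha⟩ := hlt
  exact Finset.sum_lt_sum (fun x _ => numPreferred_le_of_pref_or_eq hE (hle x))
    ⟨a, Finset.mem_univ a, numPreferred_lt_of_pref hE (hτ' a) ha⟩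

end numPreferred

lemma Is1POM.exists_isPOM_range_eq [Fintype A] [∀ a, IsStrictOrder B (pref a)] {τ : A → B}
    (hτ : Injective τ) (h1 : Is1POM pref τ) : ∃ σ, IsPOM pref σ ∧ range σ = range τ := by
  induction hn : ∑ a, numPreferred pref (range τ) a (τ a) using Nat.strong_induction_on
    generalizing τ with
  | _ n ih =>
  by_cases hpom : ∀ S, ¬ IsBlocking pref τ S
  · exact ⟨τ, ⟨hτ, hpom⟩, rfl⟩
  push Not at hpom
  obtain ⟨S, hS⟩ := hpom
  obtain ⟨τ', hτ', hle, hlt⟩ := hS.exists_improvement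
  have hrange := h1.range_eq_of_forall_pref_or_eq hτ hτ' hle
  have hdrop : ∑ a, numPreferred pref (range τ') a (τ' a) < n := by
    rw [hrange, ← hn]
    exact sum_numPreferred_lt (toFinite _) (fun a => hrange ▸ mem_range_self a) hle hlt
  obtain ⟨σ, hσ, hστ'⟩ := ih _ hdrop hτ' (h1.of_forall_pref_or_eq hτ hτ' hle) rfl
  exact ⟨σ, hσ, hστ'.trans hrange⟩

lemma Function.exists_iterate_mem_periodicPts {α : Type*} [Finite α] (f : α → α) (x : α) :
    ∃ n, f^[n] x ∈ periodicPts f := by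
  obtain ⟨m, n, hmn, heq⟩ := Finite.exists_ne_map_eq_of_infinite (f^[·] x)
  wlog hlt : m < n generalizing m n
  · exact this n m hmn.symm heq.symm (by omega)
  refine ⟨m, mk_mem_periodicPts (Nat.sub_pos_of_lt hlt) ?_⟩
  rw [IsPeriodicPt, IsFixedPt, ← iterate_add_apply, Nat.sub_add_cancel hlt.le]
  exact heq.symm

/-- Trading along a cycle of `g`, which exists since `A` is finite. -/
lemma exists_isBlocking_of_mapsTo [Finite A] {τ : A → B} (hτ : Injective τ) {S : Set A}
    (hS : S.Nonempty) {g : A → A} (hg : MapsTo g S S) (himp : ∀ a ∈ S, pref a (τ (g a)) (τ a)) :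
    ∃ C, IsBlocking pref τ C := by
  classical
  obtain ⟨x, hx⟩ := hS
  obtain ⟨n, hn⟩ := exists_iterate_mem_periodicPts g x
  set C := S ∩ periodicPts g
  have hC : MapsTo g C C := hg.inter_inter (bijOn_periodicPts g).mapsTo
  have hCinj : InjOn g C := (bijOn_periodicPts g).injOn.mono inter_subset_right
  refine ⟨C, ⟨_, hg.iterate n hx, hn⟩, C.piecewise (τ ∘ g) τ, ?_,
    fun a ha => piecewise_eq_of_notMem _ _ _ ha, fun a ha => ?_⟩
  · refine (injective_piecewise_iff C).2 ⟨hτ.comp_injOn hCinj, hτ.injOn, ?_⟩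
    intro a ha a' ha' h
    exact ha' (hτ h ▸ hC ha)
  · rw [piecewise_eq_of_mem _ _ _ ha]
    exact himp a ha.1

lemma IsPOM.exists_notMem_forall_pref [Finite A] [∀ a, Std.Trichotomous (pref a)] {τ : A → B}
    (hτ : IsPOM pref τ) {P : Set A} (hP : Pᶜ.Nonempty) :
    ∃ a ∉ P, ∀ b, b ≠ τ a → (∀ p ∈ P, b ≠ τ p) → pref a (τ a) b := by
  by_contra! h
  have hnext : ∀ a ∈ Pᶜ, ∃ a' ∈ Pᶜ, pref a (τ a') (τ a) := by
    intro a ha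
    obtain ⟨b, hba, hbP, hab⟩ := h a ha
    have hb : pref a b (τ a) := (trichotomous b (τ a)).resolve_right (not_or.2 ⟨hba, hab⟩)
    obtain ⟨a', rfl⟩ := hτ.is1POM.mem_range_of_pref hτ.1 hb
    exact ⟨a', fun ha' => hbP a' ha' rfl, hb⟩
  choose! g hgP hg using hnext
  obtain ⟨C, hC⟩ := exists_isBlocking_of_mapsTo hτ.1 hP hgP hg
  exact hτ.2 C hC

def IsGreedySeq (pref : A → B → B → Prop) (τ : A → B) {k : ℕ} (σ : Fin k → A) : Prop :=
  ∀ i b, b ≠ τ (σ i) → (∀ j, j < i → b ≠ τ (σ j)) → pref (σ i) (τ (σ i)) b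

lemma IsGreedySeq.snoc {τ : A → B} {k : ℕ} {σ : Fin k → A} (hσ : IsGreedySeq pref τ σ) {a : A}
    (ha : ∀ b, b ≠ τ a → (∀ p ∈ range σ, b ≠ τ p) → pref a (τ a) b) :
    IsGreedySeq pref τ (Fin.snoc σ a : Fin (k + 1) → A) := by
  intro i b
  induction i using Fin.lastCases with
  | last =>
    simp only [Fin.snoc_last]
    intro hb hlt
    refine ha b hb ?_
    rintro _ ⟨j, rfl⟩
    simpa using hlt j.castSucc (Fin.castSucc_lt_last j)
  | cast i =>
    simp only [Fin.snoc_castSucc]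
    intro hb hlt
    exact hσ i b hb fun j hj => by simpa using hlt j.castSucc (Fin.castSucc_lt_castSucc_iff.2 hj)

lemma IsPOM.exists_isGreedySeq [Fintype A] [∀ a, Std.Trichotomous (pref a)] {τ : A → B}
    (hτ : IsPOM pref τ) : ∀ k ≤ Fintype.card A, ∃ σ : Fin k → A, Injective σ ∧ IsGreedySeq pref τ σ
  | 0, _ => ⟨Fin.elim0, fun i => i.elim0, fun i => i.elim0⟩
  | k + 1, hk => by
    obtain ⟨σ, hinj, hσ⟩ := hτ.exists_isGreedySeq k (by omega)
    have hP : (range σ)ᶜ.Nonempty := by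
      refine nonempty_compl.2 fun h => ?_
      have := Fintype.card_le_of_surjective σ (range_eq_univ.1 h)
      simp only [Fintype.card_fin] at this
      omega
    obtain ⟨a, ha, hfav⟩ := hτ.exists_notMem_forall_pref hP
    exact ⟨Fin.snoc σ a, Fin.snoc_injective_of_injective hinj ha, hσ.snoc hfav⟩

lemma IsPOM.exists_isGreedy [Fintype A] [∀ a, Std.Trichotomous (pref a)] {τ : A → B}
    (hτ : IsPOM pref τ) : ∃ π : Fin (Fintype.card A) ≃ A, IsGreedy pref π τ := by
  obtain ⟨σ, hinj, hσ⟩ := hτ.exists_isGreedySeq _ le_rfl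
  exact ⟨.ofBijective σ ((Fintype.bijective_iff_injective_and_card σ).2 ⟨hinj, by simp⟩), hσ⟩

end

theorem stmt2_general {A B : Type*} [Fintype A]
    (pref : A → B → B → Prop) (hpref : ∀ a, IsStrictTotalOrder B (pref a))
    (E : Finset B) :
    ((∃ τ : A → B, IsPOM pref τ ∧ Set.range τ = ↑E) ↔
      ∃ (π : Fin (Fintype.card A) ≃ A) (τ : A → B),
        Function.Injective τ ∧ IsGreedy pref π τ ∧ Set.range τ = ↑E) ∧
    ((∃ τ : A → B, IsPOM pref τ ∧ Set.range τ = ↑E) ↔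
      ∃ τ : A → B, Function.Injective τ ∧ Is1POM pref τ ∧ Set.range τ = ↑E) := by
  have := hpref
  have pom_of_1pom {τ : A → B} (hτ : Injective τ) (h1 : Is1POM pref τ) (hE : range τ = E) :
      ∃ σ, IsPOM pref σ ∧ range σ = E :=
    (h1.exists_isPOM_range_eq hτ).imp fun σ hσ => ⟨hσ.1, hσ.2.trans hE⟩
  refine ⟨⟨?_, ?_⟩, ⟨?_, ?_⟩⟩
  · rintro ⟨τ, hτ, hE⟩
    obtain ⟨π, hπ⟩ := hτ.exists_isGreedy
    exact ⟨π, τ, hτ.1, hπ, hE⟩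
  · rintro ⟨π, τ, hτ, hπ, hE⟩
    exact pom_of_1pom hτ hπ.is1POM hE
  · rintro ⟨τ, hτ, hE⟩
    exact ⟨τ, hτ.1, hτ.is1POM, hE⟩
  · rintro ⟨τ, hτ, h1, hE⟩
    exact pom_of_1pom hτ h1 hE

/-- for a set `E ⊆ B` with `|E| = |A|`, the following are
equivalent: `E` is the image of a POM; `E` is the image of a greedy matching;
`E` is the image of a 1-POM. -/
theorem stmt2 {A B : Type*} [Fintype A] [Fintype B] [DecidableEq B]
    (hAB : Fintype.card A ≤ Fintype.card B)
    (pref : A → B → B → Prop) (hpref : ∀ a, IsStrictTotalOrder B (pref a))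
    (E : Finset B) (hE : E.card = Fintype.card A) :
    ((∃ τ : A → B, IsPOM pref τ ∧ Set.range τ = ↑E) ↔
      ∃ (π : Fin (Fintype.card A) ≃ A) (τ : A → B),
        Function.Injective τ ∧ IsGreedy pref π τ ∧ Set.range τ = ↑E) ∧
    ((∃ τ : A → B, IsPOM pref τ ∧ Set.range τ = ↑E) ↔
      ∃ τ : A → B, Function.Injective τ ∧ Is1POM pref τ ∧ Set.range τ = ↑E) :=
  stmt2_general pref hpref E
end

section
/- Every Pareto optimal matching is a greedy matching: if τ is a Pareto optimal matching, then there exists a linear ordering π of the applicants such that τ equals the greedy matching induced by π. -/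
/-!
Peel off the applicants one at a time. In every nonempty set `S` of applicants some `a ∈ S`
already holds its favourite house among those not held outside `S`. Otherwise each `a ∈ S`
prefers a house not held outside `S`; if that house is vacant, `{a}` blocks `τ`, and if not,
it is `τ (σ a)` for some `σ a ∈ S`. A minimal nonempty `σ`-invariant subset of `S` is then a
union of cycles of `σ`, and trading houses along these cycles blocks `τ`. Processing such an
`a` first and recursing on `S \ {a}` yields the order.
-/

open Function Set

theorem Set.exists_nonempty_bijOn_of_mapsTo {α : Type*} [Finite α] {f : α → α} {S : Set α}
    (hS : S.Nonempty) (hf : MapsTo f S S) : ∃ C ⊆ S, C.Nonempty ∧ BijOn f C C := by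
  obtain ⟨C, ⟨hCS, hC, hfC⟩, hmin⟩ := exists_minimal_of_wellFoundedLT
    (fun C : Set α => C ⊆ S ∧ C.Nonempty ∧ MapsTo f C C) ⟨S, subset_rfl, hS, hf⟩
  have himage : f '' C ⊆ C := hfC.image_subset
  have hsurj : SurjOn f C C :=
    hmin ⟨himage.trans hCS, hC.image f, (mapsTo_image f C).mono_left himage⟩ himage
  exact ⟨C, hCS, hC, (C.toFinite.surjOn_iff_bijOn_of_mapsTo hfC).1 hsurj⟩

section Blocking

variable {A B : Type*} {pref : A → B → B → Prop} {τ : A → B}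

theorem isBlocking_singleton_of_notMem_range (hτ : Injective τ) {a : A} {b : B}
    (hb : b ∉ range τ) (hab : pref a b (τ a)) : IsBlocking pref τ {a} := by
  classical
  refine ⟨singleton_nonempty a, ({a} : Set A).piecewise (fun _ => b) τ, ?_,
    fun x hx => piecewise_eq_of_notMem _ _ _ hx, by simpa using hab⟩
  exact (injective_piecewise_iff _).2 ⟨injOn_singleton _ _, hτ.injOn,
    fun _ _ y _ h => hb ⟨y, h.symm⟩⟩

theorem isBlocking_of_bijOn (hτ : Injective τ) {σ : A → A} {C : Set A} (hC : C.Nonempty)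
    (hσ : BijOn σ C C) (hpref : ∀ a ∈ C, pref a (τ (σ a)) (τ a)) :
    IsBlocking pref τ C := by
  classical
  refine ⟨hC, C.piecewise (τ ∘ σ) τ, ?_, fun a ha => piecewise_eq_of_notMem _ _ _ ha,
    fun a ha => by simpa [piecewise_eq_of_mem _ _ _ ha] using hpref a ha⟩
  exact (injective_piecewise_iff _).2 ⟨hτ.comp_injOn hσ.injOn, hτ.injOn,
    fun x hx y hy h => hy (hτ h ▸ hσ.mapsTo hx)⟩

end Blocking

namespace IsPOM

variable {A B : Type*} {pref : A → B → B → Prop} {τ : A → B}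

theorem exists_top_choice [Finite A] (hτ : IsPOM pref τ) (htri : ∀ a, Std.Trichotomous (pref a))
    {S : Set A} (hS : S.Nonempty) :
    ∃ a ∈ S, ∀ b, b ≠ τ a → (∀ a' ∉ S, b ≠ τ a') → pref a (τ a) b := by
  by_contra! h
  have hcycle : ∀ a ∈ S, ∃ c ∈ S, pref a (τ c) (τ a) := by
    intro a ha
    obtain ⟨b, hne, hfree, hnot⟩ := h a ha
    have hab : pref a b (τ a) := by
      have := htri a
      exact ((trichotomous_of (pref a) (τ a) b).resolve_left hnot).resolve_left hne.symm
    by_cases hb : b ∈ range τ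
    · obtain ⟨c, rfl⟩ := hb
      exact ⟨c, by_contra fun hc => hfree c hc rfl, hab⟩
    · exact (hτ.2 _ (isBlocking_singleton_of_notMem_range hτ.1 hb hab)).elim
  have : Nonempty A := ⟨hS.some⟩
  choose! σ hσS hσ using hcycle
  obtain ⟨C, hCS, hC, hbij⟩ := exists_nonempty_bijOn_of_mapsTo hS hσS
  exact hτ.2 C (isBlocking_of_bijOn hτ.1 hC hbij fun a ha => hσ a (hCS ha))

/-- `l` lists `S` in a greedy order, the houses of the applicants outside `S` being taken
beforehand. -/
theorem exists_greedy_list [Finite A] [DecidableEq A] (hτ : IsPOM pref τ)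
    (htri : ∀ a, Std.Trichotomous (pref a)) (S : Finset A) :
    ∃ l : List A, l.Nodup ∧ (∀ a, a ∈ l ↔ a ∈ S) ∧
      ∀ i (hi : i < l.length) b, b ≠ τ l[i] → (∀ a ∉ S, b ≠ τ a) →
        (∀ j (hj : j < i), b ≠ τ l[j]) → pref l[i] (τ l[i]) b := by
  induction S using Finset.strongInduction with
  | H S ih =>
  rcases S.eq_empty_or_nonempty with rfl | hS
  · exact ⟨[], List.nodup_nil, by simp, by simp⟩
  obtain ⟨a, ha, htop⟩ := hτ.exists_top_choice htri (S := ↑S) hS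
  obtain ⟨l, hnd, hmem, hgreedy⟩ := ih (S.erase a) (Finset.erase_ssubset ha)
  refine ⟨a :: l, List.nodup_cons.2 ⟨by simp [hmem], hnd⟩, ?_, ?_⟩
  · intro x
    by_cases hx : x = a <;> simp [hmem, hx, show a ∈ S from ha]
  · rintro (_ | i) hi b hb hout hprev
    · exact htop b hb hout
    · refine hgreedy i _ b hb (fun a' ha' => ?_) (fun j hj => hprev (j + 1) (by omega))
      by_cases h : a' = a
      · exact h ▸ hprev 0 (by omega)
      · exact hout a' (by simpa [h] using ha')

end IsPOM

theorem stmt3_general {A B : Type*} [Fintype A]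
    (pref : A → B → B → Prop) (hpref : ∀ a, IsStrictTotalOrder B (pref a))
    (τ : A → B) (hτ : IsPOM pref τ) :
    ∃ π : Fin (Fintype.card A) ≃ A, IsGreedy pref π τ := by
  classical
  obtain ⟨l, hnd, hmem, hgreedy⟩ :=
    hτ.exists_greedy_list (fun a => (hpref a).toTrichotomous) Finset.univ
  let e := hnd.getEquivOfForallMemList l (by simp [hmem])
  have hlen : l.length = Fintype.card A := (Fintype.card_fin _).symm.trans (Fintype.card_congr e)
  refine ⟨(finCongr hlen.symm).trans e, fun i b hb hprev => ?_⟩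
  exact hgreedy i (by omega) b hb (by simp) fun j hj => hprev ⟨j, by omega⟩ hj

/-- every Pareto optimal matching is greedy. -/
theorem stmt3 {A B : Type*} [Fintype A] [Fintype B]
    (pref : A → B → B → Prop) (hpref : ∀ a, IsStrictTotalOrder B (pref a))
    (τ : A → B) (hτ : IsPOM pref τ) :
    ∃ π : Fin (Fintype.card A) ≃ A, IsGreedy pref π τ :=
  stmt3_general pref hpref τ hτ
end

section
/- Every greedy matching is Pareto optimal: for every linear ordering π of the applicants, the greedy matching τ_π has no blocking coalition. -/
/-- every greedy matching is Pareto optimal. -/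
theorem stmt4 {A B : Type*} [Fintype A] [Fintype B]
    (hAB : Fintype.card A ≤ Fintype.card B)
    (pref : A → B → B → Prop) (hpref : ∀ a, IsStrictTotalOrder B (pref a))
    (π : Fin (Fintype.card A) ≃ A) (τ : A → B)
    (hinj : Function.Injective τ) (hg : IsGreedy pref π τ) :
    ∀ S : Set A, ¬ IsBlocking pref τ S := by
  rintro S ⟨⟨a0, ha0⟩, τ', hτ'inj, hout, hpr⟩
  obtain ⟨i, hiT, hmin⟩ := (wellFounded_lt (α := Fin (Fintype.card A))).has_min
    {i | π i ∈ S} ⟨π.symm a0, by simpa using ha0⟩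
  set a := π i with ha
  have hb : pref a (τ' a) (τ a) := hpr a hiT
  have hne : τ' a ≠ τ a := by
    intro h; rw [h] at hb; exact (hpref a).irrefl _ hb
  by_cases hcase : ∀ j, j < i → τ' a ≠ τ (π j)
  · have := hg i (τ' a) hne hcase
    exact (hpref a).irrefl _ ((hpref a).trans _ _ _ this hb)
  · push_neg at hcase
    obtain ⟨j, hj, hjb⟩ := hcase
    have hjS : π j ∉ S := fun h => hmin j h hj
    have : τ' (π j) = τ' a := by rw [hout _ hjS, hjb]
    have := hτ'inj this
    rw [ha] at this
    exact absurd (π.injective this) (ne_of_lt hj)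
end

section
/- Let m be a positive integer, let the house allocation instance have m applicants, and let T be a set of k Pareto optimal matchings. Then the union of the images of the matchings in T has size at most the sum over i from 1 to k of floor(m/i). -/
section Aux

variable {A B : Type*}

/-- If `b` is not in the image of a POM `τ`, every applicant strictly prefers
their assigned house to `b`. -/
lemma pom_pref_of_notMem (pref : A → B → B → Prop)
    (hpref : ∀ a, IsStrictTotalOrder B (pref a)) {τ : A → B} (hτ : IsPOM pref τ)
    {b : B} (hb : b ∉ Set.range τ) (a : A) : pref a (τ a) b := by
  classical
  letI := hpref a
  rcases trichotomous_of (pref a) (τ a) b with h | h | h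
  · exact h
  · exact absurd ⟨a, h⟩ hb
  · exfalso
    apply hτ.2 {a}
    refine ⟨⟨a, rfl⟩, Function.update τ a b, ?_, ?_, ?_⟩
    · intro x y hxy
      by_cases hx : x = a <;> by_cases hy : y = a
      · rw [hx, hy]
      · subst hx
        rw [Function.update_self, Function.update_of_ne hy] at hxy
        exact absurd ⟨y, hxy.symm⟩ hb
      · subst hy
        rw [Function.update_self, Function.update_of_ne hx] at hxy
        exact absurd ⟨x, hxy⟩ hb
      · rw [Function.update_of_ne hx, Function.update_of_ne hy] at hxy
        exact hτ.1 hxy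
    · intro x hx
      exact Function.update_of_ne (by simpa using hx) _ _
    · intro x hx
      rcases hx with rfl
      rw [Function.update_self]
      exact h

/-- The total number of "private" houses over a finset of POMs is at most `|A|`. -/
lemma sum_private_le [Fintype A] [Fintype B] [DecidableEq (A → B)] (hA : Nonempty A)
    (pref : A → B → B → Prop) (hpref : ∀ a, IsStrictTotalOrder B (pref a))
    (T : Finset (A → B)) (hT : ∀ τ ∈ T, IsPOM pref τ) :
    ∑ τ ∈ T, (Set.range τ \ ⋃ τ' ∈ T.erase τ, Set.range τ').ncard ≤ Fintype.card A := by
  classical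
  set P : (A → B) → Set B := fun τ => Set.range τ \ ⋃ τ' ∈ T.erase τ, Set.range τ' with hP
  have hPfin : ∀ τ, (P τ).Finite := fun τ => Set.toFinite _
  set Pf : (A → B) → Finset B := fun τ => (hPfin τ).toFinset with hPf
  have hmemPf : ∀ τ b, b ∈ Pf τ ↔ b ∈ P τ := fun τ b => (hPfin τ).mem_toFinset
  have hcard : ∀ τ, (P τ).ncard = (Pf τ).card := fun τ =>
    Set.ncard_eq_toFinset_card _ (hPfin τ)
  have hdisj : ∀ τ₁ ∈ T, ∀ τ₂ ∈ T, τ₁ ≠ τ₂ → Disjoint (Pf τ₁) (Pf τ₂) := by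
    intro τ₁ h₁ τ₂ h₂ hne
    rw [Finset.disjoint_left]
    intro b hb1 hb2
    rw [hmemPf] at hb1 hb2
    have hb1r : b ∈ Set.range τ₁ := hb1.1
    have : τ₁ ∈ T.erase τ₂ := Finset.mem_erase.mpr ⟨hne, h₁⟩
    exact hb2.2 (Set.mem_biUnion this hb1r)
  have hsum : ∑ τ ∈ T, (Pf τ).card = (T.biUnion Pf).card :=
    (Finset.card_biUnion hdisj).symm
  -- injection from the biUnion to A
  have hkey : ∀ b ∈ T.biUnion Pf, ∃ a : A, ∃ τ ∈ T, τ a = b ∧ b ∈ P τ := by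
    intro b hb
    rcases Finset.mem_biUnion.mp hb with ⟨τ, hτ, hbτ⟩
    rw [hmemPf] at hbτ
    rcases hbτ.1 with ⟨a, ha⟩
    exact ⟨a, τ, hτ, ha, hbτ⟩
  set f : B → A := fun b =>
    if h : ∃ a : A, ∃ τ ∈ T, τ a = b ∧ b ∈ P τ then h.choose else Classical.arbitrary A
    with hf
  have hbound : (T.biUnion Pf).card ≤ (Finset.univ : Finset A).card := by
    apply Finset.card_le_card_of_injOn f (fun b _ => Finset.mem_univ _)
    intro b₁ hb₁ b₂ hb₂ hfeq
    by_contra hne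
    have h₁ := hkey b₁ hb₁
    have h₂ := hkey b₂ hb₂
    have hf₁ : f b₁ = h₁.choose := by rw [hf]; simp only [dif_pos h₁]
    have hf₂ : f b₂ = h₂.choose := by rw [hf]; simp only [dif_pos h₂]
    obtain ⟨τ₁, hτ₁T, hτ₁b, hb₁P⟩ := h₁.choose_spec
    obtain ⟨τ₂, hτ₂T, hτ₂b, hb₂P⟩ := h₂.choose_spec
    set a := h₁.choose with ha
    have haa : h₂.choose = a := by rw [← hf₂, ← hfeq, hf₁]
    rw [haa] at hτ₂b
    have hττ : τ₁ ≠ τ₂ := by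
      intro h; apply hne; rw [← hτ₁b, ← hτ₂b, h]
    have hb₁n : b₁ ∉ Set.range τ₂ := by
      intro hr
      exact hb₁P.2 (Set.mem_biUnion (Finset.mem_erase.mpr ⟨hττ.symm, hτ₂T⟩) hr)
    have hb₂n : b₂ ∉ Set.range τ₁ := by
      intro hr
      exact hb₂P.2 (Set.mem_biUnion (Finset.mem_erase.mpr ⟨hττ, hτ₁T⟩) hr)
    have hp1 : pref a b₂ b₁ := by
      have := pom_pref_of_notMem pref hpref (hT τ₂ hτ₂T) hb₁n a
      rwa [hτ₂b] at this
    have hp2 : pref a b₁ b₂ := by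
      have := pom_pref_of_notMem pref hpref (hT τ₁ hτ₁T) hb₂n a
      rwa [hτ₁b] at this
    letI := hpref a
    exact irrefl_of (pref a) b₁ (trans_of (pref a) hp2 hp1)
  calc ∑ τ ∈ T, (P τ).ncard = ∑ τ ∈ T, (Pf τ).card := by simp_rw [hcard]
    _ = (T.biUnion Pf).card := hsum
    _ ≤ (Finset.univ : Finset A).card := hbound
    _ = Fintype.card A := Finset.card_univ

lemma stmt5_aux [Fintype A] [Fintype B] (m : ℕ)
    (hm : Fintype.card A = m) (hmpos : 0 < m)
    (pref : A → B → B → Prop) (hpref : ∀ a, IsStrictTotalOrder B (pref a)) :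
    ∀ k (T : Finset (A → B)), T.card = k → (∀ τ ∈ T, IsPOM pref τ) →
      (⋃ τ ∈ T, Set.range τ).ncard ≤ ∑ i ∈ Finset.Icc 1 k, m / i := by
  classical
  have hA : Nonempty A := Fintype.card_pos_iff.mp (by omega)
  intro k
  induction k with
  | zero =>
    intro T hk _
    rw [Finset.card_eq_zero.mp hk]
    simp
  | succ k ih =>
    intro T hk hT
    -- there is a matching with few private houses
    have hsum := sum_private_le hA pref hpref T hT
    rw [hm] at hsum
    have hex : ∃ τ₀ ∈ T, (Set.range τ₀ \ ⋃ τ' ∈ T.erase τ₀, Set.range τ').ncard ≤ m / (k+1) := by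
      by_contra h
      push_neg at h
      have hge : ∀ τ ∈ T, m / (k+1) + 1 ≤ (Set.range τ \ ⋃ τ' ∈ T.erase τ, Set.range τ').ncard :=
        fun τ hτ => h τ hτ
      have hns := Finset.card_nsmul_le_sum T _ _ hge
      rw [hk, smul_eq_mul] at hns
      have hdm : (k+1) * (m / (k+1)) + m % (k+1) = m := Nat.div_add_mod m (k+1)
      have hmod : m % (k+1) < k + 1 := Nat.mod_lt m (by omega)
      have hx : (k+1) * (m / (k+1)) + (k+1) ≤ m := by
        calc (k+1) * (m / (k+1)) + (k+1) = (k+1) * (m / (k+1) + 1) := by ring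
          _ ≤ ∑ τ ∈ T, (Set.range τ \ ⋃ τ' ∈ T.erase τ, Set.range τ').ncard := hns
          _ ≤ m := hsum
      omega
    obtain ⟨τ₀, hτ₀T, hτ₀⟩ := hex
    set T' := T.erase τ₀ with hT'
    have hT'card : T'.card = k := by
      rw [hT', Finset.card_erase_of_mem hτ₀T, hk]
      omega
    have hT'pom : ∀ τ ∈ T', IsPOM pref τ := fun τ hτ => hT τ (Finset.mem_of_mem_erase hτ)
    have ihT' := ih T' hT'card hT'pom
    set U' : Set B := ⋃ τ ∈ T', Set.range τ with hU'
    have hsub : (⋃ τ ∈ T, Set.range τ) ⊆ U' ∪ (Set.range τ₀ \ U') := by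
      intro b hb
      rcases Set.mem_iUnion₂.mp hb with ⟨τ, hτ, hbτ⟩
      by_cases hbu : b ∈ U'
      · exact Or.inl hbu
      · rcases eq_or_ne τ τ₀ with rfl | hne
        · exact Or.inr ⟨hbτ, hbu⟩
        · exact absurd (Set.mem_biUnion (Finset.mem_erase.mpr ⟨hne, hτ⟩) hbτ) hbu
    calc (⋃ τ ∈ T, Set.range τ).ncard
        ≤ (U' ∪ (Set.range τ₀ \ U')).ncard := Set.ncard_le_ncard hsub (Set.toFinite _)
      _ ≤ U'.ncard + (Set.range τ₀ \ U').ncard := Set.ncard_union_le _ _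
      _ ≤ (∑ i ∈ Finset.Icc 1 k, m / i) + m / (k+1) := Nat.add_le_add ihT' hτ₀
      _ = ∑ i ∈ Finset.Icc 1 (k+1), m / i := (Finset.sum_Icc_succ_top (by omega) _).symm

end Aux

/-- for a set `T` of `k` POMs of an instance with `m` applicants,
the union of the images of the matchings in `T` has size at most
`∑_{i=1}^k ⌊m/i⌋`. -/
theorem stmt5 {A B : Type*} [Fintype A] [Fintype B] (m k : ℕ)
    (hm : Fintype.card A = m) (hmpos : 0 < m)
    (pref : A → B → B → Prop) (hpref : ∀ a, IsStrictTotalOrder B (pref a))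
    (T : Finset (A → B)) (hT : ∀ τ ∈ T, IsPOM pref τ) (hk : T.card = k) :
    (⋃ τ ∈ T, Set.range τ).ncard ≤ ∑ i ∈ Finset.Icc 1 k, m / i := by
  exact stmt5_aux m hm hmpos pref hpref k T hk hT
end

section
/- A house x of a house allocation instance is avoidable (i.e., there exists a Pareto optimal matching whose image does not contain x) if and only if for every set R of applicants, the set E_x(R) of houses that at least one applicant in R strictly prefers to x has size at least |R|. -/
/-- a house `x` is avoidable iff for every set `R` of applicants,
the set `E_x(R)` of houses that some applicant of `R` strictly prefers to `x`
has size at least `|R|`. -/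
theorem stmt8 {A B : Type*} [Fintype A] [Fintype B]
    (hAB : Fintype.card A ≤ Fintype.card B)
    (pref : A → B → B → Prop) (hpref : ∀ a, IsStrictTotalOrder B (pref a))
    (x : B) :
    (∃ τ : A → B, IsPOM pref τ ∧ x ∉ Set.range τ) ↔
      ∀ R : Finset A, R.card ≤ {y : B | ∃ r ∈ R, pref r y x}.ncard := by
  classical
  constructor
  · rintro ⟨τ, ⟨hinj, hpo⟩, hx⟩ R
    have key : ∀ a : A, pref a (τ a) x := by
      intro a
      by_contra h
      have hne : τ a ≠ x := fun h' => hx ⟨a, h'⟩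
      haveI := hpref a
      have hxa : pref a x (τ a) := by
        rcases trichotomous_of (pref a) x (τ a) with h1 | h1 | h1
        · exact h1
        · exact absurd h1.symm hne
        · exact absurd h1 h
      apply hpo {a}
      refine ⟨⟨a, rfl⟩, fun b => if b = a then x else τ b, ?_, ?_, ?_⟩
      · intro b c hbc
        by_cases hb : b = a <;> by_cases hc : c = a <;> simp [hb, hc] at hbc ⊢
        · exact absurd hbc.symm (fun h' => hx ⟨c, h'⟩)
        · exact absurd hbc (fun h' => hx ⟨b, h'⟩)
        · exact hinj hbc
      · intro b hb
        simp only [Set.mem_singleton_iff] at hb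
        simp [hb]
      · intro b hb
        simp only [Set.mem_singleton_iff] at hb
        subst hb
        simpa using hxa
    have hsub : ((R.image τ : Finset B) : Set B) ⊆ {y : B | ∃ r ∈ R, pref r y x} := by
      rintro y hy
      simp only [Finset.coe_image, Set.mem_image, Finset.mem_coe] at hy
      obtain ⟨r, hr, rfl⟩ := hy
      exact ⟨r, hr, key r⟩
    calc R.card = (R.image τ).card := (Finset.card_image_of_injective R hinj).symm
      _ = ((R.image τ : Finset B) : Set B).ncard := (Set.ncard_coe_finset _).symm
      _ ≤ _ := Set.ncard_le_ncard hsub (Set.toFinite _)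
  · intro hHall
    set t : A → Finset B := fun a => Finset.univ.filter (fun y => pref a y x) with ht
    have hHall' : ∀ s : Finset A, s.card ≤ (s.biUnion t).card := by
      intro s
      have : {y : B | ∃ r ∈ s, pref r y x} = ((s.biUnion t : Finset B) : Set B) := by
        ext y; simp [ht]
      have := hHall s
      rwa [‹{y : B | ∃ r ∈ s, pref r y x} = _›, Set.ncard_coe_finset] at this
    obtain ⟨f, hfinj, hf⟩ := (Finset.all_card_le_biUnion_card_iff_exists_injective t).mp hHall'
    have hfP : ∀ a, pref a (f a) x := by
      intro a; have := hf a; simp [ht] at this; exact this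
    set F : Finset (A → B) :=
      Finset.univ.filter (fun τ => Function.Injective τ ∧ ∀ a, pref a (τ a) x) with hF
    have hfF : f ∈ F := by simp [hF, hfinj, hfP]
    set w : (A → B) → ℕ := fun τ => ∑ a, (Finset.univ.filter (fun y => pref a (τ a) y)).card
      with hw
    obtain ⟨τ, hτF, hmax⟩ := F.exists_max_image w ⟨f, hfF⟩
    simp only [hF, Finset.mem_filter, Finset.mem_univ, true_and] at hτF
    obtain ⟨hinj, hP⟩ := hτF
    have term_lt : ∀ (a : A) (b c : B), pref a b c →
        (Finset.univ.filter (fun y => pref a c y)).card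
          < (Finset.univ.filter (fun y => pref a b y)).card := by
      intro a b c hbc
      haveI := hpref a
      apply Finset.card_lt_card
      constructor
      · intro y hy
        simp only [Finset.mem_filter, Finset.mem_univ, true_and] at hy ⊢
        exact trans_of (pref a) hbc hy
      · intro hsub
        have := hsub (by simp [hbc] : c ∈ Finset.univ.filter (fun y => pref a b y))
        simp only [Finset.mem_filter, Finset.mem_univ, true_and] at this
        exact irrefl_of (pref a) c this
    refine ⟨τ, ⟨hinj, ?_⟩, ?_⟩
    · rintro S ⟨⟨a0, ha0⟩, τ', hτ'inj, hout, himp⟩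
      have hP' : ∀ a, pref a (τ' a) x := by
        intro a
        by_cases ha : a ∈ S
        · haveI := hpref a
          exact trans_of (pref a) (himp a ha) (hP a)
        · rw [hout a ha]; exact hP a
      have hτ'F : τ' ∈ F := by simp [hF, hτ'inj, hP']
      have hlt : w τ < w τ' := by
        apply Finset.sum_lt_sum
        · intro a _
          by_cases ha : a ∈ S
          · exact (term_lt a (τ' a) (τ a) (himp a ha)).le
          · rw [hout a ha]
        · exact ⟨a0, Finset.mem_univ _, term_lt a0 (τ' a0) (τ a0) (himp a0 ha0)⟩
      exact absurd (hmax τ' hτ'F) (not_le.mpr hlt)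
    · rintro ⟨a, ha⟩
      haveI := hpref a
      exact irrefl_of (pref a) x (ha ▸ hP a)
end

section
/- In a house allocation instance, if |A| = m and τ is a Pareto optimal matching, then for every applicant a, the house τ(a) is among the m most preferred houses of a. -/
/-- if `|A| = m` and `τ` is a POM, each applicant's assigned
house lies among its `m` most preferred houses, i.e. fewer than `m` houses are
strictly preferred to it. -/
theorem stmt11 {A B : Type*} [Fintype A] [Fintype B] (m : ℕ)
    (hm : Fintype.card A = m) (hAB : m ≤ Fintype.card B)
    (pref : A → B → B → Prop) (hpref : ∀ a, IsStrictTotalOrder B (pref a))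
    (τ : A → B) (hτ : IsPOM pref τ) :
    ∀ a : A, {b : B | pref a b (τ a)}.ncard < m := by
  intro a
  by_contra h
  push_neg at h
  obtain ⟨hinj, hblock⟩ := hτ
  have hirr := (hpref a).irrefl
  classical
  have hcard_range : (Set.range τ).ncard = m := by
    rw [← Set.image_univ, Set.ncard_image_of_injective _ hinj, Set.ncard_univ,
      Nat.card_eq_fintype_card, hm]
  have hmem : τ a ∈ Set.range τ := ⟨a, rfl⟩
  have hnsub : ¬ {b : B | pref a b (τ a)} ⊆ Set.range τ := by
    intro hsub
    have hsub' : {b : B | pref a b (τ a)} ⊆ Set.range τ \ {τ a} := by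
      intro b hb
      exact ⟨hsub hb, fun he => hirr _ (by simpa [Set.mem_singleton_iff.mp he] using hb)⟩
    have hle := Set.ncard_le_ncard hsub' ((Set.finite_range τ).diff)
    rw [Set.ncard_diff_singleton_of_mem hmem, hcard_range] at hle
    have hm0 : 1 ≤ m := hm ▸ Fintype.card_pos_iff.mpr ⟨a⟩
    omega
  obtain ⟨b, hb, hbr⟩ := Set.not_subset.mp hnsub
  apply hblock {a}
  refine ⟨⟨a, rfl⟩, Function.update τ a b, ?_, ?_, ?_⟩
  · intro x y hxy
    by_cases hx : x = a <;> by_cases hy : y = a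
    · rw [hx, hy]
    · subst hx
      rw [Function.update_self, Function.update_of_ne hy] at hxy
      exact absurd ⟨y, hxy.symm⟩ hbr
    · subst hy
      rw [Function.update_self, Function.update_of_ne hx] at hxy
      exact absurd ⟨x, hxy⟩ hbr
    · exact hinj (by simpa [Function.update_of_ne hx, Function.update_of_ne hy] using hxy)
  · intro x hx
    exact Function.update_of_ne (by simpa using hx) _ _
  · intro x hx
    rw [Set.mem_singleton_iff.mp hx]
    simpa using hb
end

section
/- Every 1-Pareto optimal matching is dominated by a Pareto optimal matching whose image is contained in its image: if τ₀ is a matching with no blocking coalition of size one, then there exists a Pareto optimal matching τ₁ with τ₁(A) ⊆ { b ∈ B : b ∈ τ₀(A) }, and since |τ₁(A)| = |τ₀(A)| = |A|, in fact τ₁(A) = τ₀(A). -/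
/-!
Among the matchings that weakly improve on `τ₀` for every applicant, pick one that is minimal
for Pareto domination, a strict order on the finite set of matchings. A house that an applicant
strictly prefers to its `τ₀`-house is already taken under `τ₀`, since otherwise that applicant
alone would block `τ₀`; so each such matching maps into `τ₀(A)`, hence onto it by counting.
A blocking coalition of the chosen matching would give a matching of the same family that
dominates it.
-/

open Function Set

theorem Function.Injective.update_of_notMem_range {A B : Type*} [DecidableEq A] {f : A → B}
    (hf : Injective f) (a : A) {b : B} (hb : b ∉ range f) : Injective (update f a b) := by
  intro x y h
  by_cases hx : x = a <;> by_cases hy : y = a <;> simp_all [hf.eq_iff]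

section Domination

variable {A B : Type*} (pref : A → B → B → Prop)

def WeaklyDominates (σ τ : A → B) : Prop :=
  ∀ a, σ a = τ a ∨ pref a (σ a) (τ a)

def Dominates (σ τ : A → B) : Prop :=
  WeaklyDominates pref σ τ ∧ σ ≠ τ

variable {pref}

theorem WeaklyDominates.refl (τ : A → B) : WeaklyDominates pref τ τ :=
  fun _ => Or.inl rfl

theorem WeaklyDominates.trans [∀ a, IsTrans B (pref a)] {ρ σ τ : A → B}
    (h₁ : WeaklyDominates pref ρ σ) (h₂ : WeaklyDominates pref σ τ) :
    WeaklyDominates pref ρ τ := fun a => by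
  rcases h₁ a with h | h <;> rcases h₂ a with h' | h'
  · exact .inl (h.trans h')
  · exact .inr (h ▸ h')
  · exact .inr (h' ▸ h)
  · exact .inr (_root_.trans h h')

theorem WeaklyDominates.antisymm [∀ a, Std.Asymm (pref a)] {σ τ : A → B}
    (h₁ : WeaklyDominates pref σ τ) (h₂ : WeaklyDominates pref τ σ) : σ = τ := by
  funext a
  rcases h₁ a with h | h
  · exact h
  · rcases h₂ a with h' | h'
    · exact h'.symm
    · exact absurd h' (asymm h)

instance [∀ a, IsTrans B (pref a)] [∀ a, Std.Asymm (pref a)] :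
    IsTrans (A → B) (Dominates pref) where
  trans _ _ _ h₁ h₂ := ⟨h₁.1.trans h₂.1, fun h => h₁.2 (h₁.1.antisymm (h ▸ h₂.1))⟩

instance : Std.Irrefl (Dominates pref) where
  irrefl _ h := h.2 rfl

theorem wellFounded_dominates [Finite A] [Finite B] [∀ a, IsTrans B (pref a)]
    [∀ a, Std.Asymm (pref a)] : WellFounded (Dominates pref) :=
  Finite.wellFounded_of_trans_of_irrefl _

theorem IsBlocking.exists_dominates [∀ a, Std.Irrefl (pref a)] {τ : A → B} {S : Set A}
    (h : IsBlocking pref τ S) : ∃ σ, Injective σ ∧ Dominates pref σ τ := by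
  obtain ⟨⟨a, ha⟩, σ, hσ, hout, hin⟩ := h
  refine ⟨σ, hσ, fun x => ?_, fun hστ => irrefl (r := pref a) _ (hστ ▸ hin a ha)⟩
  by_cases hx : x ∈ S
  · exact .inr (hin x hx)
  · exact .inl (hout x hx)

theorem isPOM_of_forall_not_dominates [∀ a, Std.Irrefl (pref a)] {τ : A → B}
    (hτ : Injective τ) (h : ∀ σ, Injective σ → ¬ Dominates pref σ τ) : IsPOM pref τ :=
  ⟨hτ, fun _ hS => let ⟨σ, hσ, hdom⟩ := hS.exists_dominates; h σ hσ hdom⟩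

theorem mem_range_of_not_isBlocking_singleton {τ : A → B} (hτ : Injective τ) {a : A}
    (h : ¬ IsBlocking pref τ {a}) {b : B} (hb : pref a b (τ a)) : b ∈ range τ := by
  classical
  by_contra hb'
  refine h ⟨singleton_nonempty a, update τ a b, hτ.update_of_notMem_range a hb', ?_, ?_⟩
  · intro x hx
    exact update_of_ne hx _ _
  · rintro x rfl
    simpa using hb

theorem WeaklyDominates.range_subset {τ σ : A → B} (hτ : Injective τ)
    (h : ∀ a, ¬ IsBlocking pref τ {a}) (hσ : WeaklyDominates pref σ τ) :
    range σ ⊆ range τ := by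
  rintro _ ⟨a, rfl⟩
  rcases hσ a with ha | ha
  · exact ha ▸ mem_range_self a
  · exact mem_range_of_not_isBlocking_singleton hτ (h a) ha

end Domination

theorem Function.Injective.range_eq_of_range_subset {A B : Type*} [Finite A]
    {f g : A → B} (hf : Injective f) (hg : Injective g) (h : range f ⊆ range g) :
    range f = range g :=
  eq_of_subset_of_ncard_le h (by rw [ncard_range_of_injective hf, ncard_range_of_injective hg])

/-- every 1-Pareto optimal matching has the same image as some
Pareto optimal matching. -/
theorem stmt14 {A B : Type*} [Fintype A] [Fintype B]
    (pref : A → B → B → Prop) (hpref : ∀ a, IsStrictTotalOrder B (pref a))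
    (τ₀ : A → B) (h0 : Function.Injective τ₀)
    (h1 : ∀ a : A, ¬ IsBlocking pref τ₀ {a}) :
    ∃ τ₁ : A → B, IsPOM pref τ₁ ∧ Set.range τ₁ = Set.range τ₀ := by
  have := hpref
  obtain ⟨τ₁, ⟨hτ₁, hτ₁τ₀⟩, hmin⟩ := (wellFounded_dominates (pref := pref)).has_min
    {τ | Injective τ ∧ WeaklyDominates pref τ τ₀} ⟨τ₀, h0, .refl τ₀⟩
  refine ⟨τ₁, isPOM_of_forall_not_dominates hτ₁ fun σ hσ hστ₁ => ?_, ?_⟩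
  · exact hmin σ ⟨hσ, hστ₁.1.trans hτ₁τ₀⟩ hστ₁
  · exact hτ₁.range_eq_of_range_subset h0 (hτ₁τ₀.range_subset h0 h1)
end

section
/- For every k ≥ 1 there exists a house allocation instance with m = 2^k applicants such that the number of reachable houses (houses in the image of at least one Pareto optimal matching) is at least (m/2)·log₂(4m) = (k+2)·2^{k-1}. -/
/-!
Label the applicants by bit strings `a ∈ {0,1}^(k+1)`. Besides a leaf house for each applicant,
every level `j` carries one node house for each pair of applicants differing exactly in bit `j`:
`2^(k+1) + (k+1)·2^k = (k+3)·2^k` houses in all. Applicant `a` ranks its own nodes by increasing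
level, then its leaf, then everything else.

Fix `b`, give `b` its leaf and every other `a` its node at the lowest bit where `a` and `b` differ.
This matching is Pareto optimal by the serial dictatorship criterion, applicants choosing in order
of that level: if `a` agrees with `b` below `j`, its node at level `j` is held by the applicant that
agrees with `a` except that its bit `j` differs from `b`'s, and that applicant has level `j`.
Every house is used by one of these matchings, so all houses are reachable.
-/

open Function

section Greedy

variable {A B : Type*}

theorem IsPOM.of_priority (pref : A → B → B → Prop) {τ : A → B} (hτ : Injective τ)
    (σ : A → ℕ) (h : ∀ a x, pref a x (τ a) → ∃ a', σ a' < σ a ∧ τ a' = x) : IsPOM pref τ := by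
  refine ⟨hτ, ?_⟩
  rintro S ⟨hne, τ', hτ', hout, hin⟩
  -- a member of `S` of least priority would take the house of someone outside `S`
  obtain ⟨a, haS, hmin⟩ := (InvImage.wf σ wellFounded_lt).has_min S hne
  obtain ⟨a', hlt, ha'⟩ := h a (τ' a) (hin a haS)
  have ha'S : a' ∉ S := fun h' => hmin a' h' hlt
  obtain rfl : a' = a := hτ' ((hout a' ha'S).trans ha')
  exact lt_irrefl _ hlt

def tierPref [LinearOrder B] (tier : A → B → ℕ) (a : A) (x y : B) : Prop :=
  toLex (tier a x, x) < toLex (tier a y, y)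

theorem isStrictTotalOrder_tierPref [LinearOrder B] (tier : A → B → ℕ) (a : A) :
    IsStrictTotalOrder B (tierPref tier a) :=
  @instIsStrictTotalOrderLt _
    (LinearOrder.lift' (fun x => toLex (tier a x, x))
      fun _ _ h => congrArg (fun p => (ofLex p).2) h)

/-- `τ` is the outcome of serial dictatorship in which applicants choose in increasing order of
the tier of the house they end up with. -/
structure IsGreedyFor (tier : A → B → ℕ) (τ : A → B) : Prop where
  injective : Injective τ
  eq_of_tier_eq : ∀ a x, tier a x = tier a (τ a) → x = τ a
  exists_of_tier_lt : ∀ a x, tier a x < tier a (τ a) →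
    ∃ a', tier a' (τ a') < tier a (τ a) ∧ τ a' = x

namespace IsGreedyFor

variable {tier : A → B → ℕ} {τ : A → B}

theorem isPOM [LinearOrder B] (h : IsGreedyFor tier τ) : IsPOM (tierPref tier) τ :=
  IsPOM.of_priority _ h.injective (fun a => tier a (τ a)) fun a x hx => by
    rcases Prod.Lex.toLex_lt_toLex.1 hx with hlt | ⟨heq, hlt⟩
    · exact h.exists_of_tier_lt a x hlt
    · exact absurd hlt (h.eq_of_tier_eq a x heq ▸ lt_irrefl _)

theorem comp_equiv {A' B' : Type*} (h : IsGreedyFor tier τ) (eA : A' ≃ A) (eB : B' ≃ B) :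
    IsGreedyFor (fun a x => tier (eA a) (eB x)) (eB.symm ∘ τ ∘ eA) where
  injective := eB.symm.injective.comp (h.injective.comp eA.injective)
  eq_of_tier_eq a x hx := by
    simp only [comp_apply, Equiv.apply_symm_apply] at hx ⊢
    rw [← h.eq_of_tier_eq _ _ hx, Equiv.symm_apply_apply]
  exists_of_tier_lt a x hx := by
    simp only [comp_apply, Equiv.apply_symm_apply] at hx ⊢
    obtain ⟨a', hlt, ha'⟩ := h.exists_of_tier_lt _ _ hx
    exact ⟨eA.symm a', by simpa using hlt, by simp [ha']⟩

end IsGreedyFor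

end Greedy

namespace BitTree

/-- The node `(j, y)` is shared by the two applicants whose bits off level `j` read `y`. -/
abbrev House (k : ℕ) := (Fin (k + 1) → Bool) ⊕ (Fin (k + 1) × (Fin k → Bool))

variable {k : ℕ} {a b : Fin (k + 1) → Bool} {j : Fin (k + 1)}

def node (j : Fin (k + 1)) (a : Fin (k + 1) → Bool) : House k := .inr (j, j.removeNth a)

def tier (a : Fin (k + 1) → Bool) : House k → ℕ
  | .inl x => if x = a then k + 1 else k + 2
  | .inr (j, y) => if y = j.removeNth a then j else k + 2

def lowDiff (h : a ≠ b) : Fin (k + 1) :=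
  ({i | a i ≠ b i} : Finset _).min' (by
    obtain ⟨i, hi⟩ := Function.ne_iff.1 h
    exact ⟨i, by simpa using hi⟩)

theorem lowDiff_eq_iff (h : a ≠ b) : lowDiff h = j ↔ a j ≠ b j ∧ ∀ i < j, a i = b i := by
  have hmem : a (lowDiff h) ≠ b (lowDiff h) := by
    have : lowDiff h ∈ ({i | a i ≠ b i} : Finset (Fin (k + 1))) := Finset.min'_mem _ _
    simpa using this
  have hle : ∀ i, a i ≠ b i → lowDiff h ≤ i := fun i hi => Finset.min'_le _ _ (by simpa using hi)
  refine ⟨?_, fun hj => le_antisymm (hle j hj.1) (not_lt.1 fun hlt => hmem (hj.2 _ hlt))⟩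
  rintro rfl
  exact ⟨hmem, fun i hi => not_not.1 fun hne => (hle i hne).not_gt hi⟩

def assign (b a : Fin (k + 1) → Bool) : House k :=
  if h : a = b then .inl b else node (lowDiff h) a

theorem assign_self : assign b b = .inl b := dif_pos rfl

theorem assign_of_ne (h : a ≠ b) : assign b a = node (lowDiff h) a := dif_neg h

theorem assign_eq_node (hj : a j ≠ b j) (hlt : ∀ i < j, a i = b i) : assign b a = node j a := by
  have h : a ≠ b := fun h => hj (h ▸ rfl)
  rw [assign_of_ne h, (lowDiff_eq_iff h).2 ⟨hj, hlt⟩]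

theorem tier_node_self : tier a (node j a) = j := by simp [tier, node]

theorem tier_assign_le : tier a (assign b a) ≤ k + 1 := by
  by_cases h : a = b
  · subst h; simp [assign_self, tier]
  · rw [assign_of_ne h, tier_node_self]; omega

theorem agree_of_lt_tier_assign {i : Fin (k + 1)} (hi : (i : ℕ) < tier a (assign b a)) :
    a i = b i := by
  by_cases h : a = b
  · rw [h]
  · rw [assign_of_ne h, tier_node_self] at hi
    exact ((lowDiff_eq_iff h).1 rfl).2 i hi

theorem eq_of_tier_eq_of_le {x y : House k} (hxy : tier a x = tier a y) (hy : tier a y ≤ k + 1) :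
    x = y := by
  rcases x with x | ⟨i, x⟩ <;> rcases y with y | ⟨j, y⟩ <;> simp only [tier] at hxy hy <;>
    split_ifs at hxy hy <;>
    first | omega | (subst_vars; rfl) | (obtain rfl := Fin.ext hxy; subst_vars; rfl)

theorem exists_assign_eq_node (hlt : ∀ i < j, a i = b i) :
    ∃ a', assign b a' = node j a ∧ tier a' (assign b a') = j := by
  set a' := update a j (!b j)
  have h : assign b a' = node j a' :=
    assign_eq_node (by simp [a']) fun i hi => by simp [a', hi.ne, hlt i hi]
  exact ⟨a', h.trans (by simp [node, a']), by rw [h, tier_node_self]⟩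

theorem exists_assign_eq (x : House k) : ∃ b a, assign b a = x := by
  rcases x with b | ⟨j, y⟩
  · exact ⟨b, b, assign_self⟩
  · obtain ⟨a', ha', -⟩ := exists_assign_eq_node (j := j) (a := j.insertNth false y)
      (b := j.insertNth false y) fun _ _ => rfl
    exact ⟨j.insertNth false y, a', by simp [ha', node]⟩

theorem assign_injective (b : Fin (k + 1) → Bool) : Injective (assign b) := by
  intro a a' h
  by_cases ha : a = b <;> by_cases ha' : a' = b
  · rw [ha, ha']
  · rw [ha, assign_self, assign_of_ne ha'] at h; cases h
  · rw [ha', assign_self, assign_of_ne ha] at h; cases h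
  · rw [assign_of_ne ha, assign_of_ne ha'] at h
    simp only [node, Sum.inr.injEq, Prod.mk.injEq] at h
    obtain ⟨hj, hy⟩ := h
    have hd := ((lowDiff_eq_iff ha).1 rfl).1
    have hd' := ((lowDiff_eq_iff ha').1 hj.symm).1
    -- both differ from `b` at the common level, so they agree there
    have hbit : a (lowDiff ha) = a' (lowDiff ha) := by
      revert hd hd'
      cases a (lowDiff ha) <;> cases a' (lowDiff ha) <;> cases b (lowDiff ha) <;> simp
    rw [← Fin.insertNth_self_removeNth (lowDiff ha) a,
      ← Fin.insertNth_self_removeNth (lowDiff ha) a', hbit, hy, hj]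

theorem isGreedyFor_assign (b : Fin (k + 1) → Bool) : IsGreedyFor tier (assign b) where
  injective := assign_injective b
  eq_of_tier_eq _ _ hx := eq_of_tier_eq_of_le hx tier_assign_le
  exists_of_tier_lt a x hx := by
    have hagree : ∀ i : Fin (k + 1), (i : ℕ) < tier a (assign b a) → a i = b i :=
      fun _ => agree_of_lt_tier_assign
    have hle := tier_assign_le (a := a) (b := b)
    generalize tier a (assign b a) = t at hx hle hagree ⊢
    rcases x with x | ⟨j, y⟩
    · simp only [tier] at hx; split_ifs at hx <;> omega
    · simp only [tier] at hx
      split_ifs at hx with hy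
      · subst hy
        obtain ⟨a', h1, h2⟩ := exists_assign_eq_node (j := j) fun i hi => hagree i (by omega)
        exact ⟨a', h2 ▸ hx, by simp [h1, node]⟩
      · omega

theorem card_house : Fintype.card (House k) = (k + 3) * 2 ^ k := by
  simp only [Fintype.card_sum, Fintype.card_prod, Fintype.card_fun, Fintype.card_bool,
    Fintype.card_fin]
  ring

end BitTree

/-- for every `k ≥ 1` there is a house allocation instance with
`m = 2^k` applicants whose number of reachable houses is at least
`(k+2)·2^(k-1) = (m/2)·log₂(4m)`. -/
theorem stmt15 (k : ℕ) (hk : 1 ≤ k) :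
    ∃ (n : ℕ) (pref : Fin (2 ^ k) → Fin n → Fin n → Prop),
      (∀ a, IsStrictTotalOrder (Fin n) (pref a)) ∧ 2 ^ k ≤ n ∧
      (k + 2) * 2 ^ (k - 1) ≤
        {b : Fin n | ∃ τ : Fin (2 ^ k) → Fin n,
          IsPOM pref τ ∧ b ∈ Set.range τ}.ncard := by
  obtain ⟨k, rfl⟩ : ∃ k', k = k' + 1 := ⟨k - 1, by omega⟩
  let eA : Fin (2 ^ (k + 1)) ≃ (Fin (k + 1) → Bool) := (Fintype.equivFinOfCardEq (by simp)).symm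
  let eB : Fin (Fintype.card (BitTree.House k)) ≃ BitTree.House k :=
    (Fintype.equivFin (BitTree.House k)).symm
  let pref := tierPref fun a x => BitTree.tier (eA a) (eB x)
  have hreach : ∀ x, ∃ τ, IsPOM pref τ ∧ x ∈ Set.range τ := by
    intro x
    obtain ⟨b, a, h⟩ := BitTree.exists_assign_eq (eB x)
    exact ⟨_, ((BitTree.isGreedyFor_assign b).comp_equiv eA eB).isPOM, eA.symm a, by simp [h]⟩
  refine ⟨_, pref, isStrictTotalOrder_tierPref _, ?_, ?_⟩
  · rw [BitTree.card_house, pow_succ, mul_comm]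
    exact Nat.mul_le_mul_right _ (by omega)
  · rw [show {x | _} = Set.univ from Set.eq_univ_of_forall hreach, Set.ncard_univ,
      Nat.card_eq_fintype_card, Fintype.card_fin, BitTree.card_house, Nat.add_sub_cancel]
end

section
/- Consider a house allocation instance where each applicant's preference list has length 2 (only the first 2 houses of each applicant's list matter), and suppose the bipartite row-element graph (with vertex set A ∪ B', B' the set of houses appearing among the first two preferences, and an edge between applicant a and house b iff b is among a's first two preferences) is connected and contains a cycle. Then there exists a Pareto optimal matching whose image contains all houses of B'. (Here |B'| ≤ |A| holds necessarily.) -/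
/-- A 2-column house allocation instance: every applicant has a top house and
a (distinct) second house; only these two houses of its preference list
matter. -/
structure TwoCol (A B : Type*) where
  h1 : A → B
  h2 : A → B
  distinct : ∀ a, h1 a ≠ h2 a

namespace TwoCol

variable {A B : Type*}

/-- A (partial) matching of a 2-column instance: each applicant receives
either its top house, its second house, or nothing, and no house is given to
two applicants. -/
def IsMatching (M : TwoCol A B) (τ : A → Option B) : Prop :=
  (∀ a b, τ a = some b → b = M.h1 a ∨ b = M.h2 a) ∧
    ∀ a a' b, τ a = some b → τ a' = some b → a = a'

/-- Applicant `a` strictly prefers outcome `x` to outcome `y`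
(top house ≻ second house ≻ unassigned). -/
def PrefOpt (M : TwoCol A B) (a : A) (x y : Option B) : Prop :=
  (x = some (M.h1 a) ∧ y ≠ some (M.h1 a)) ∨ (x = some (M.h2 a) ∧ y = none)

/-- `S` is a blocking coalition of `τ`. -/
def IsBlocking (M : TwoCol A B) (τ : A → Option B) (S : Set A) : Prop :=
  S.Nonempty ∧ ∃ τ' : A → Option B, M.IsMatching τ' ∧
    (∀ a ∉ S, τ' a = τ a) ∧ ∀ a ∈ S, M.PrefOpt a (τ' a) (τ a)

/-- `τ` is a Pareto optimal matching of the 2-column instance `M`. -/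
def IsPOM (M : TwoCol A B) (τ : A → Option B) : Prop :=
  M.IsMatching τ ∧ ∀ S : Set A, ¬ M.IsBlocking τ S

/-- The bipartite row-element graph of a 2-column instance: applicant `a` is
adjacent to house `b` iff `b` is one of `a`'s two listed houses. -/
def graph (M : TwoCol A B) : SimpleGraph (A ⊕ B) where
  Adj x y :=
    (∃ a b, x = Sum.inl a ∧ y = Sum.inr b ∧ (M.h1 a = b ∨ M.h2 a = b)) ∨
    (∃ a b, y = Sum.inl a ∧ x = Sum.inr b ∧ (M.h1 a = b ∨ M.h2 a = b))
  symm := by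
    constructor
    rintro x y (⟨a, b, h1, h2, h3⟩ | ⟨a, b, h1, h2, h3⟩)
    · exact Or.inr ⟨a, b, h1, h2, h3⟩
    · exact Or.inl ⟨a, b, h1, h2, h3⟩
  loopless := by constructor; rintro x (⟨a, b, rfl, h2, _⟩ | ⟨a, b, rfl, h2, _⟩) <;> simp at h2

end TwoCol

/-! The row-element graph has `|A| + |B|` vertices and `2 |A|` edges, and a connected graph with a
cycle has at least as many edges as vertices, so `|B| ≤ |A|`. This is Hall's condition for the
set of all houses; for a nonempty proper set `S` of houses, connectivity yields an applicant with
exactly one house `b` in `S`, so dropping `b` from `S` loses at least that applicant and Hall's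
condition for `S` follows from the one for `S \ {b}`. Hall's theorem thus gives a matching covering
every house. Among covering matchings take one maximising the number of assigned applicants plus
the number of applicants holding their top house. The matching of a blocking coalition unassigns
nobody and takes no top house away, so it is again covering (a matching covers `B` iff it assigns
`|B|` applicants), and each coalition member either becomes assigned or gets its top house, so it
scores strictly higher. -/

open Finset SimpleGraph

theorem SimpleGraph.Connected.card_le_card_edgeSet_of_not_isAcyclic {V : Type*} [Finite V]
    {G : SimpleGraph V} (hG : G.Connected) (hcyc : ¬G.IsAcyclic) :
    Nat.card V ≤ Nat.card G.edgeSet := by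
  have hne : Nat.card G.edgeSet + 1 ≠ Nat.card V := fun h ↦
    hcyc (isTree_iff_connected_and_card.mpr ⟨hG, h⟩).isAcyclic
  have := hG.card_vert_le_card_edgeSet_add_one
  omega

namespace TwoCol

variable {A B : Type*} (M : TwoCol A B)

section Graph

@[simp]
theorem graph_adj_inl_inr {a : A} {b : B} :
    M.graph.Adj (.inl a) (.inr b) ↔ M.h1 a = b ∨ M.h2 a = b := by
  simp [graph]

theorem graph_isBipartiteWith : M.graph.IsBipartiteWith (Set.range .inl) (Set.range .inr) where
  disjoint := Set.disjoint_range_iff.mpr fun _ _ ↦ Sum.inl_ne_inr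
  mem_of_adj := by
    rintro x y (⟨a, b, rfl, rfl, -⟩ | ⟨a, b, rfl, rfl, -⟩) <;> simp

theorem exists_not_h1_mem_iff_h2_mem (hconn : M.graph.Connected) {S : Set B} (hne : S.Nonempty)
    (hS : S ≠ Set.univ) : ∃ a, ¬(M.h1 a ∈ S ↔ M.h2 a ∈ S) := by
  by_contra! hclosed
  obtain ⟨b₀, hb₀⟩ := hne
  obtain ⟨b₁, hb₁⟩ := (Set.ne_univ_iff_exists_notMem S).mp hS
  obtain ⟨p⟩ := hconn.preconnected (.inr b₀) (.inr b₁)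
  obtain ⟨⟨⟨x, y⟩, hxy⟩, -, hx, hy⟩ :=
    p.exists_boundary_dart {x | x.elim (fun a ↦ M.h1 a ∈ S) (· ∈ S)} hb₀ hb₁
  simp only at hx hy hxy
  rcases hxy with ⟨a, b, rfl, rfl, rfl | rfl⟩ | ⟨a, b, rfl, rfl, rfl | rfl⟩ <;>
    simp_all

variable [Fintype A] [Fintype B]

theorem degree_inl [DecidableRel M.graph.Adj] (a : A) : M.graph.degree (.inl a) = 2 := by
  classical
  have : M.graph.neighborFinset (.inl a) = {Sum.inr (M.h1 a), Sum.inr (M.h2 a)} := by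
    ext (a' | b)
    · rw [mem_neighborFinset]
      simp [graph]
    · simp [eq_comm]
  rw [degree, this, card_pair (by simpa using M.distinct a)]

theorem card_edgeSet : Nat.card M.graph.edgeSet = 2 * Nat.card A := by
  classical
  have hsum := isBipartiteWith_sum_degrees_eq_card_edges (s := univ.map .inl) (t := univ.map .inr)
    (by simpa using M.graph_isBipartiteWith)
  rw [Nat.card_eq_fintype_card, ← edgeFinset_card, ← hsum, sum_map]
  exact (sum_congr rfl fun a _ ↦ M.degree_inl a).trans (by simp [mul_comm])

theorem card_le_card_of_connected_of_not_isAcyclic (hconn : M.graph.Connected)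
    (hcyc : ¬M.graph.IsAcyclic) : Fintype.card B ≤ Fintype.card A := by
  have := hconn.card_le_card_edgeSet_of_not_isAcyclic hcyc
  rw [card_edgeSet, Nat.card_sum] at this
  simp only [Nat.card_eq_fintype_card] at this
  omega

end Graph

section Hall

variable [Fintype A] [DecidableEq B]

def applicantsOf (S : Finset B) : Finset A := {a | M.h1 a ∈ S ∨ M.h2 a ∈ S}

theorem applicantsOf_mono {S T : Finset B} (h : S ⊆ T) : M.applicantsOf S ⊆ M.applicantsOf T :=
  monotone_filter_right _ fun _ _ ↦ Or.imp (@h _) (@h _)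

theorem applicantsOf_univ [Fintype B] : M.applicantsOf univ = univ := by
  simp [applicantsOf]

theorem exists_mem_applicantsOf_notMem_applicantsOf_erase {S : Finset B} {a : A}
    (ha : ¬(M.h1 a ∈ S ↔ M.h2 a ∈ S)) :
    ∃ b ∈ S, a ∈ M.applicantsOf S ∧ a ∉ M.applicantsOf (S.erase b) := by
  by_cases h1 : M.h1 a ∈ S
  · exact ⟨M.h1 a, h1, by simp [applicantsOf, h1], by simp_all [applicantsOf]⟩
  · have h2 : M.h2 a ∈ S := by tauto
    exact ⟨M.h2 a, h2, by simp [applicantsOf, h2], by simp_all [applicantsOf]⟩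

theorem card_le_card_applicantsOf [Fintype B] (hconn : M.graph.Connected)
    (hcyc : ¬M.graph.IsAcyclic) (S : Finset B) : #S ≤ #(M.applicantsOf S) := by
  classical
  induction S using Finset.strongInduction with
  | H S ih =>
  rcases S.eq_empty_or_nonempty with rfl | hne
  · simp
  by_cases huniv : S = univ
  · subst huniv
    rw [applicantsOf_univ, card_univ, card_univ]
    exact M.card_le_card_of_connected_of_not_isAcyclic hconn hcyc
  obtain ⟨a, ha⟩ := M.exists_not_h1_mem_iff_h2_mem hconn (S := (S : Set B)) (by simpa using hne)
    (by simpa using huniv)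
  obtain ⟨b, hb, haS, haS'⟩ := M.exists_mem_applicantsOf_notMem_applicantsOf_erase ha
  calc #S = #(S.erase b) + 1 := (card_erase_add_one hb).symm
    _ ≤ #(M.applicantsOf (S.erase b)) + 1 := by gcongr; exact ih _ (erase_ssubset hb)
    _ ≤ #((M.applicantsOf S).erase a) + 1 := by
      gcongr
      rw [← erase_eq_of_notMem haS']
      exact erase_subset_erase a (M.applicantsOf_mono (erase_subset b S))
    _ = #(M.applicantsOf S) := card_erase_add_one haS

end Hall

def CoversHouses (τ : A → Option B) : Prop := ∀ b, ∃ a, τ a = some b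

theorem exists_isMatching_coversHouses [Fintype A] [Fintype B] (hconn : M.graph.Connected)
    (hcyc : ¬M.graph.IsAcyclic) : ∃ τ, M.IsMatching τ ∧ CoversHouses τ := by
  classical
  obtain ⟨g, hg, hgb⟩ := (Fintype.all_card_le_filter_rel_iff_exists_injective
    fun b a ↦ M.h1 a = b ∨ M.h2 a = b).mp fun S ↦ by
      simpa [applicantsOf, and_or_left, exists_or] using M.card_le_card_applicantsOf hconn hcyc S
  refine ⟨Function.partialInv g, ⟨fun a b h ↦ ?_, fun a a' b h h' ↦ ?_⟩,
    fun b ↦ ⟨g b, Function.partialInv_left hg b⟩⟩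
  · rw [hg.isPartialInv] at h
    subst h
    exact (hgb b).imp Eq.symm Eq.symm
  · rw [hg.isPartialInv] at h h'
    exact h.symm.trans h'

def Improves (τ' τ : A → Option B) (S : Set A) : Prop :=
  (∀ a ∉ S, τ' a = τ a) ∧ ∀ a ∈ S, M.PrefOpt a (τ' a) (τ a)

section Weight

variable [Fintype A]

def assigned (τ : A → Option B) : Finset A := {a | (τ a).isSome}

def matched [Fintype B] [DecidableEq B] (τ : A → Option B) : Finset B :=
  {b | ∃ a, τ a = some b}

def topAssigned [DecidableEq B] (τ : A → Option B) : Finset A := {a | τ a = some (M.h1 a)}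

def weight [DecidableEq B] (τ : A → Option B) : ℕ := #(assigned τ) + #(M.topAssigned τ)

end Weight

variable {M}

theorem PrefOpt.isSome {a : A} {x y : Option B} (h : M.PrefOpt a x y) : x.isSome := by
  rcases h with ⟨rfl, -⟩ | ⟨rfl, -⟩ <;> rfl

theorem PrefOpt.ne_some_h1 {a : A} {x y : Option B} (h : M.PrefOpt a x y) :
    y ≠ some (M.h1 a) := by
  rcases h with ⟨-, h⟩ | ⟨-, rfl⟩
  exacts [h, (Option.some_ne_none _).symm]

variable [Fintype A] {τ τ' : A → Option B}

theorem IsMatching.card_assigned [Fintype B] [DecidableEq B] (hτ : M.IsMatching τ) :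
    #(assigned τ) = #(matched τ) := by
  refine card_bij (fun a ha ↦ (τ a).get (mem_filter.mp ha).2) (fun a _ ↦ ?_)
    (fun a₁ _ a₂ _ h ↦ ?_) fun b hb ↦ ?_
  · simp [matched]
  · exact hτ.2 a₁ a₂ _ (Option.some_get _).symm (by rw [h]; exact (Option.some_get _).symm)
  · obtain ⟨a, ha⟩ := (mem_filter.mp hb).2
    exact ⟨a, by simp [assigned, ha], by simp [ha]⟩

theorem CoversHouses.of_assigned_subset [Fintype B] (hcov : CoversHouses τ)
    (hτ : M.IsMatching τ) (hτ' : M.IsMatching τ') (hsub : assigned τ ⊆ assigned τ') :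
    CoversHouses τ' := by
  classical
  have hmatched : matched τ = univ :=
    eq_univ_of_forall fun b ↦ mem_filter.mpr ⟨mem_univ b, hcov b⟩
  have hle : #(univ : Finset B) ≤ #(matched τ') := by
    rw [← hmatched, ← hτ.card_assigned, ← hτ'.card_assigned]
    exact card_le_card hsub
  intro b
  simpa [matched] using (eq_univ_of_card _ (le_antisymm (card_le_univ _) hle)).ge (mem_univ b)

namespace Improves

variable {S : Set A}

theorem assigned_subset (h : M.Improves τ' τ S) : assigned τ ⊆ assigned τ' := by
  intro a ha
  by_cases haS : a ∈ S
  · simpa [assigned] using (h.2 a haS).isSome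
  · simpa [assigned, h.1 a haS] using ha

theorem topAssigned_subset [DecidableEq B] (h : M.Improves τ' τ S) :
    M.topAssigned τ ⊆ M.topAssigned τ' := by
  intro a ha
  have ha' : τ a = some (M.h1 a) := (mem_filter.mp ha).2
  have haS : a ∉ S := fun haS ↦ (h.2 a haS).ne_some_h1 ha'
  simpa [topAssigned, h.1 a haS] using ha'

theorem weight_lt [DecidableEq B] (h : M.Improves τ' τ S) (hS : S.Nonempty) :
    M.weight τ < M.weight τ' := by
  obtain ⟨a, haS⟩ := hS
  rcases h.2 a haS with ⟨hx, hy⟩ | ⟨hx, hy⟩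
  · refine add_lt_add_of_le_of_lt (card_le_card h.assigned_subset) (card_lt_card ?_)
    exact (ssubset_iff_of_subset h.topAssigned_subset).mpr
      ⟨a, by simp [topAssigned, hx], by simp [topAssigned, hy]⟩
  · refine add_lt_add_of_lt_of_le (card_lt_card ?_) (card_le_card h.topAssigned_subset)
    exact (ssubset_iff_of_subset h.assigned_subset).mpr
      ⟨a, by simp [assigned, hx], by simp [assigned, hy]⟩

end Improves

theorem exists_isPOM_coversHouses [Fintype B] {τ₀ : A → Option B} (h₀ : M.IsMatching τ₀)
    (hcov₀ : CoversHouses τ₀) : ∃ τ, M.IsPOM τ ∧ CoversHouses τ := by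
  classical
  obtain ⟨τ, ⟨hτ, hcov⟩, hmax⟩ := Set.exists_max_image
    {τ | M.IsMatching τ ∧ CoversHouses τ} M.weight (Set.toFinite _) ⟨τ₀, h₀, hcov₀⟩
  refine ⟨τ, ⟨hτ, ?_⟩, hcov⟩
  rintro S ⟨hS, τ', hτ', himp : M.Improves τ' τ S⟩
  exact (himp.weight_lt hS).not_ge
    (hmax τ' ⟨hτ', hcov.of_assigned_subset hτ hτ' himp.assigned_subset⟩)

end TwoCol

theorem stmt16_general {A B : Type*} [Fintype A] [Fintype B] (M : TwoCol A B)
    (hconn : M.graph.Connected) (hcyc : ¬ M.graph.IsAcyclic) :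
    ∃ τ : A → Option B, M.IsPOM τ ∧ ∀ b : B, ∃ a, τ a = some b := by
  obtain ⟨τ₀, h₀, hcov₀⟩ := M.exists_isMatching_coversHouses hconn hcyc
  exact TwoCol.exists_isPOM_coversHouses h₀ hcov₀

/-- in a 2-column instance whose bipartite row-element graph is
connected and contains a cycle, there is a Pareto optimal matching whose image
contains all listed houses. (We take `B` to consist exactly of the listed
houses.) -/
theorem stmt16 {A B : Type*} [Fintype A] [Fintype B] (M : TwoCol A B)
    (hlisted : ∀ b : B, ∃ a, M.h1 a = b ∨ M.h2 a = b)
    (hconn : M.graph.Connected) (hcyc : ¬ M.graph.IsAcyclic) :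
    ∃ τ : A → Option B, M.IsPOM τ ∧ ∀ b : B, ∃ a, τ a = some b :=
  stmt16_general M hconn hcyc
end

section
/- Let (M, L) be a house allocation instance with degree list L = (ℓ_1, ..., ℓ_m): each applicant r must be matched with exactly ℓ_r distinct houses, pairwise disjointly across applicants. A house x is avoidable (some Pareto optimal multi-matching's image omits x) if and only if for every set R of applicants, the set of houses that at least one applicant in R strictly prefers to x has size at least Σ_{r ∈ R} ℓ_r. -/
/-- For applicant `r`, the set of houses `P` is weakly better than the set `Q`
(of the same size): listing both in decreasing preference order of `r`, the
`i`-th element of `P` is weakly preferred to the `i`-th element of `Q`;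
equivalently, there is a bijection `g : Q → P` with `g q` weakly preferred to
`q` for every `q ∈ Q`. -/
def WeaklyBetterSet {A B : Type*} (pref : A → B → B → Prop) (r : A)
    (P Q : Finset B) : Prop :=
  ∃ g : Q → P, Function.Bijective g ∧
    ∀ q : Q, pref r ((g q : B)) (q : B) ∨ ((g q : B)) = (q : B)

/-- `P` is (strictly) better than `Q` for applicant `r`. -/
def BetterSet {A B : Type*} (pref : A → B → B → Prop) (r : A)
    (P Q : Finset B) : Prop :=
  P ≠ Q ∧ WeaklyBetterSet pref r P Q

/-- A multi-matching with degree list `ℓ`: each applicant `a` receives a set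
of `ℓ a` houses, the assigned sets being pairwise disjoint. -/
def IsMultiMatching {A B : Type*} (ℓ : A → ℕ) (τ : A → Finset B) : Prop :=
  (∀ a, (τ a).card = ℓ a) ∧ ∀ a a', a ≠ a' → Disjoint (τ a) (τ a')

/-- `S` is a blocking coalition of the multi-matching `τ`. -/
def IsBlockingM {A B : Type*} (pref : A → B → B → Prop) (ℓ : A → ℕ)
    (τ : A → Finset B) (S : Set A) : Prop :=
  S.Nonempty ∧ ∃ τ' : A → Finset B, IsMultiMatching ℓ τ' ∧
    (∀ a ∉ S, τ' a = τ a) ∧ ∀ a ∈ S, BetterSet pref a (τ' a) (τ a)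

/-- `τ` is a Pareto optimal multi-matching. -/
def IsPOMM {A B : Type*} (pref : A → B → B → Prop) (ℓ : A → ℕ)
    (τ : A → Finset B) : Prop :=
  IsMultiMatching ℓ τ ∧ ∀ S : Set A, ¬ IsBlockingM pref ℓ τ S

/-!
If a Pareto optimal multi-matching avoids `x`, each applicant `r` prefers all of its houses to `x`
(otherwise swapping a worse house for the free house `x` blocks with coalition `{r}`), so the houses
of a set `R` of applicants form `∑_{r ∈ R} ℓ r` distinct houses that someone in `R` prefers to `x`.
Conversely, the counting condition is Hall's condition for giving each `r` exactly `ℓ r` houses it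
prefers to `x`. Among all such multi-matchings pick one maximizing the total rank
`∑ₐ ∑_{y ∈ τ a} #{z | y ≻ₐ z}`; a blocking coalition keeps every house above `x` and strictly
increases the total rank, so the maximizer is Pareto optimal.
-/

open Finset

section Rank

variable {B : Type*} [Fintype B]

open scoped Classical in
noncomputable def rankBelow (r : B → B → Prop) (y : B) : ℕ :=
  #{z | r y z}

variable {r : B → B → Prop} [IsStrictOrder B r] {y z : B}

theorem rankBelow_lt_rankBelow (h : r y z) : rankBelow r z < rankBelow r y := by
  unfold rankBelow
  refine card_lt_card ⟨fun w hw => ?_, fun hsub => ?_⟩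
  · simp only [mem_filter, mem_univ, true_and] at hw ⊢
    exact _root_.trans h hw
  · exact irrefl z (by simpa using hsub (by simpa using h))

theorem rankBelow_le_rankBelow (h : r y z ∨ y = z) : rankBelow r z ≤ rankBelow r y := by
  rcases h with h | rfl
  exacts [(rankBelow_lt_rankBelow h).le, le_rfl]

end Rank

section BetterSet

variable {A B : Type*} {pref : A → B → B → Prop} {r : A} {P Q : Finset B}

theorem WeaklyBetterSet.pref_of_mem [IsTrans B (pref r)] {x : B}
    (h : WeaklyBetterSet pref r P Q) (hQ : ∀ q ∈ Q, pref r q x) : ∀ p ∈ P, pref r p x := by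
  obtain ⟨g, hg, hpref⟩ := h
  suffices ∀ p : P, pref r p x from fun p hp => this ⟨p, hp⟩
  refine hg.2.forall.2 fun q => ?_
  rcases hpref q with h | h
  · exact _root_.trans h (hQ q q.2)
  · exact h ▸ hQ q q.2

theorem BetterSet.sum_rankBelow_lt [Fintype B] [IsStrictOrder B (pref r)]
    (h : BetterSet pref r P Q) :
    ∑ y ∈ Q, rankBelow (pref r) y < ∑ y ∈ P, rankBelow (pref r) y := by
  obtain ⟨hne, g, hg, hpref⟩ := h
  have hsum : ∑ q : Q, rankBelow (pref r) (g q) = ∑ p ∈ P, rankBelow (pref r) p := by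
    rw [← sum_coe_sort P]
    exact Fintype.sum_bijective g hg _ _ fun _ => rfl
  rw [← sum_coe_sort Q, ← hsum]
  -- if `g` fixed every house then `P ⊆ Q`, and equal cardinalities would force `P = Q`
  obtain ⟨q₀, hq₀⟩ : ∃ q : Q, (g q : B) ≠ q := by
    by_contra! hfix
    have hPQ : ∀ p : P, (p : B) ∈ Q := hg.2.forall.2 fun q => by rw [hfix q]; exact q.2
    refine hne (eq_of_subset_of_card_le (fun p hp => hPQ ⟨p, hp⟩) ?_)
    · simpa using (Fintype.card_of_bijective hg).le
  refine sum_lt_sum (fun q _ => rankBelow_le_rankBelow (hpref q)) ⟨q₀, mem_univ _, ?_⟩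
  exact rankBelow_lt_rankBelow ((hpref q₀).resolve_right hq₀)

theorem betterSet_insert_erase [DecidableEq B] {q₀ x₀ : B} (hq₀ : q₀ ∈ Q) (hx₀ : x₀ ∉ Q)
    (h : pref r x₀ q₀) : BetterSet pref r (insert x₀ (Q.erase q₀)) Q := by
  refine ⟨fun hPQ => hx₀ (hPQ ▸ mem_insert_self _ _), ?_⟩
  let g : Q → (insert x₀ (Q.erase q₀) : Finset B) := fun q =>
    if hq : (q : B) = q₀ then ⟨x₀, mem_insert_self _ _⟩
    else ⟨q, mem_insert_of_mem (mem_erase.2 ⟨hq, q.2⟩)⟩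
  have hg : Function.Injective g := by
    intro q q' hqq'
    by_cases hq : (q : B) = q₀ <;> by_cases hq' : (q' : B) = q₀ <;>
      simp only [g, hq, hq', dite_true, dite_false, Subtype.mk.injEq] at hqq'
    · exact Subtype.ext (hq.trans hq'.symm)
    · exact absurd (hqq' ▸ q'.2) hx₀
    · exact absurd (hqq' ▸ q.2) hx₀
    · exact Subtype.ext hqq'
  refine ⟨g, (Fintype.bijective_iff_injective_and_card g).2 ⟨hg, ?_⟩, fun q => ?_⟩
  · simp [card_insert_of_notMem (fun hx => hx₀ (mem_of_mem_erase hx)), card_erase_add_one hq₀]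
  · by_cases hq : (q : B) = q₀ <;> simp [g, hq, h]

end BetterSet

section MultiMatching

variable {A B : Type*} {pref : A → B → B → Prop} {ℓ : A → ℕ} {τ : A → Finset B}

theorem IsMultiMatching.update [DecidableEq A] (hτ : IsMultiMatching ℓ τ) {r : A} {P : Finset B}
    (hP : #P = ℓ r) (hdisj : ∀ a ≠ r, Disjoint P (τ a)) :
    IsMultiMatching ℓ (Function.update τ r P) := by
  refine ⟨fun a => ?_, fun a a' haa' => ?_⟩
  · rcases eq_or_ne a r with rfl | ha
    · simpa using hP
    · simpa [ha] using hτ.1 a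
  · rcases eq_or_ne a r with rfl | ha
    · simpa [haa'.symm] using hdisj a' haa'.symm
    rcases eq_or_ne a' r with rfl | ha'
    · simpa [ha] using (hdisj a ha).symm
    simpa [ha, ha'] using hτ.2 a a' haa'

theorem IsMultiMatching.sum_le_ncard [Finite B] (hτ : IsMultiMatching ℓ τ) {p : A → B → Prop}
    {R : Finset A} (h : ∀ r ∈ R, ∀ y ∈ τ r, p r y) :
    ∑ r ∈ R, ℓ r ≤ {y | ∃ r ∈ R, p r y}.ncard := by
  classical
  calc ∑ r ∈ R, ℓ r = #(R.biUnion τ) := by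
        rw [card_biUnion fun r _ r' _ h => hτ.2 r r' h]
        exact sum_congr rfl fun r _ => (hτ.1 r).symm
    _ = (↑(R.biUnion τ) : Set B).ncard := (Set.ncard_coe_finset _).symm
    _ ≤ {y | ∃ r ∈ R, p r y}.ncard := Set.ncard_le_ncard (fun y hy => by
        obtain ⟨r, hr, hy⟩ := mem_biUnion.1 hy
        exact ⟨r, hr, h r hr y hy⟩)

theorem IsPOMM.pref_of_mem (hτ : IsPOMM pref ℓ τ) {r : A} [Std.Trichotomous (pref r)]
    {x y : B} (hx : ∀ a, x ∉ τ a) (hy : y ∈ τ r) : pref r y x := by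
  classical
  rcases trichotomous (r := pref r) y x with h | rfl | h
  · exact h
  · exact absurd hy (hx r)
  · exfalso
    refine hτ.2 {r} ⟨Set.singleton_nonempty r, Function.update τ r (insert x ((τ r).erase y)),
      hτ.1.update ?_ fun a ha => ?_, fun a ha => Function.update_of_ne ha _ _, ?_⟩
    · rw [card_insert_of_notMem fun hx' => hx r (mem_of_mem_erase hx'), card_erase_add_one hy,
        hτ.1.1 r]
    · exact disjoint_insert_left.2 ⟨hx a, (hτ.1.2 r a ha.symm).mono_left (erase_subset _ _)⟩
    · rintro a rfl
      simpa using betterSet_insert_erase hy (hx a) h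

theorem exists_isMultiMatching_subset [DecidableEq B] (E : A → Finset B)
    (h : ∀ R : Finset A, ∑ r ∈ R, ℓ r ≤ #(R.biUnion E)) :
    ∃ τ, IsMultiMatching ℓ τ ∧ ∀ a, τ a ⊆ E a := by
  classical
  -- apply Hall's marriage theorem to `ℓ r` copies of each applicant `r`
  have hall : ∀ s : Finset (Σ r, Fin (ℓ r)), #s ≤ #(s.biUnion fun i => E i.1) := by
    intro s
    calc #s ≤ #((s.image Sigma.fst).sigma fun r => (univ : Finset (Fin (ℓ r)))) :=
          card_le_card fun i hi => mem_sigma.2 ⟨mem_image_of_mem _ hi, mem_univ _⟩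
      _ = ∑ r ∈ s.image Sigma.fst, ℓ r := by simp
      _ ≤ #((s.image Sigma.fst).biUnion E) := h _
      _ = #(s.biUnion fun i => E i.1) := by rw [image_biUnion]
  obtain ⟨f, hf, hfE⟩ := (all_card_le_biUnion_card_iff_exists_injective _).1 hall
  refine ⟨fun r => univ.image fun i => f ⟨r, i⟩, ⟨fun r => ?_, fun a a' haa' => ?_⟩, fun r => ?_⟩
  · have hinj : Function.Injective fun i : Fin (ℓ r) => f ⟨r, i⟩ :=
      hf.comp (sigma_mk_injective (β := fun r => Fin (ℓ r)))
    simpa using card_image_of_injective univ hinj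
  · simp only [disjoint_left, mem_image, mem_univ, true_and]
    rintro _ ⟨i, rfl⟩ ⟨j, hij⟩
    exact haa' (congrArg Sigma.fst (hf hij)).symm
  · intro y hy
    obtain ⟨i, -, rfl⟩ := mem_image.1 hy
    exact hfE _

noncomputable def totalRank [Fintype A] [Fintype B] (pref : A → B → B → Prop)
    (τ : A → Finset B) : ℕ :=
  ∑ a, ∑ y ∈ τ a, rankBelow (pref a) y

theorem totalRank_lt_totalRank [Fintype A] [Fintype B] (hpref : ∀ a, IsStrictOrder B (pref a))
    {τ' : A → Finset B} {S : Set A} (hS : S.Nonempty) (hout : ∀ a ∉ S, τ' a = τ a)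
    (hbet : ∀ a ∈ S, BetterSet pref a (τ' a) (τ a)) : totalRank pref τ < totalRank pref τ' := by
  obtain ⟨a₀, ha₀⟩ := hS
  refine sum_lt_sum (fun a _ => ?_) ⟨a₀, mem_univ _, (hbet a₀ ha₀).sum_rankBelow_lt⟩
  by_cases ha : a ∈ S
  · exact (hbet a ha).sum_rankBelow_lt.le
  · rw [hout a ha]

theorem exists_isPOMM_forall_pref [Fintype A] [Fintype B] (hpref : ∀ a, IsStrictOrder B (pref a))
    {x : B} (hτ₀ : IsMultiMatching ℓ τ) (hτ₀x : ∀ a, ∀ y ∈ τ a, pref a y x) :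
    ∃ τ, IsPOMM pref ℓ τ ∧ ∀ a, ∀ y ∈ τ a, pref a y x := by
  set C := {τ : A → Finset B | IsMultiMatching ℓ τ ∧ ∀ a, ∀ y ∈ τ a, pref a y x}
  obtain ⟨τ, ⟨hτ, hτx⟩, hmax⟩ := (Set.toFinite C).exists_maximalFor (totalRank pref) C
    ⟨τ, hτ₀, hτ₀x⟩
  refine ⟨τ, ⟨hτ, ?_⟩, hτx⟩
  rintro S ⟨hS, τ', hτ', hout, hbet⟩
  have hτ'C : τ' ∈ C := ⟨hτ', fun a y hy => by
    by_cases ha : a ∈ S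
    · exact (hbet a ha).2.pref_of_mem (hτx a) y hy
    · exact hτx a y (hout a ha ▸ hy)⟩
  have hlt := totalRank_lt_totalRank hpref hS hout hbet
  exact hlt.not_ge (hmax hτ'C hlt.le)

end MultiMatching

theorem stmt19_general {A B : Type*} [Fintype A] [Fintype B]
    (pref : A → B → B → Prop) (hpref : ∀ a, IsStrictTotalOrder B (pref a))
    (ℓ : A → ℕ) (x : B) :
    (∃ τ : A → Finset B, IsPOMM pref ℓ τ ∧ ∀ a, x ∉ τ a) ↔
      ∀ R : Finset A, (∑ r ∈ R, ℓ r) ≤ {y : B | ∃ r ∈ R, pref r y x}.ncard := by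
  classical
  constructor
  · rintro ⟨τ, hτ, hx⟩ R
    exact hτ.1.sum_le_ncard fun r _ y hy => haveI := hpref r; hτ.pref_of_mem hx hy
  · intro hall
    obtain ⟨τ₀, hτ₀, hτ₀x⟩ := exists_isMultiMatching_subset (ℓ := ℓ) (fun r => {y | pref r y x})
      fun R => by
        have hR : {y : B | ∃ r ∈ R, pref r y x} = ↑(R.biUnion fun r => {y | pref r y x}) := by
          ext; simp
        simpa only [hR, Set.ncard_coe_finset] using hall R
    obtain ⟨τ, hτ, hτx⟩ := exists_isPOMM_forall_pref (fun a => (hpref a).toIsStrictOrder) hτ₀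
      fun a y hy => by simpa using hτ₀x a hy
    exact ⟨τ, hτ, fun a hxa => irrefl x (hτx a x hxa)⟩

/-- in the multi-matching setting with degree list `ℓ`, a house
`x` is avoidable iff for every set `R` of applicants, the set of houses that
some applicant of `R` strictly prefers to `x` has size at least
`∑_{r ∈ R} ℓ r`. -/
theorem stmt19 {A B : Type*} [Fintype A] [Fintype B]
    (pref : A → B → B → Prop) (hpref : ∀ a, IsStrictTotalOrder B (pref a))
    (ℓ : A → ℕ) (hℓ : ∀ a, 1 ≤ ℓ a) (x : B) :
    (∃ τ : A → Finset B, IsPOMM pref ℓ τ ∧ ∀ a, x ∉ τ a) ↔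
      ∀ R : Finset A, (∑ r ∈ R, ℓ r) ≤ {y : B | ∃ r ∈ R, pref r y x}.ncard :=
  stmt19_general pref hpref ℓ x
end
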